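/- arXiv:2103.06077 — 4 statements merged into one kernel-verified Lean document; each statement's English description precedes it below -/
import Mathlib

section
/- Let S be an inverse semigroup satisfying the identity xⁿ = xⁿ⁺¹ for some n ≥ 1. For all a, b ∈ S, the element a ⊕ b := (a·b⁻¹)ⁿ·a satisfies a ⊕ b ≤ a with respect to the natural partial order. -/
/-- `pw x n` is the power `xⁿ` in a semigroup, for `n ≥ 1`
(with junk value `pw x 0 = x`). -/
def pw {S : Type*} [Mul S] (x : S) : ℕ → S
  | 0 => x
  | 1 => x
  | n + 2 => pw x (n + 1) * x

lemma pw_succ {S : Type*} [Mul S] (x : S) (n : ℕ) (hn : 1 ≤ n) :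
    pw x (n + 1) = pw x n * x := by
  obtain ⟨k, rfl⟩ := Nat.exists_eq_add_of_le hn
  rw [show 1 + k + 1 = k + 2 by ring, show 1 + k = k + 1 by ring]
  rfl

lemma pw_add {S : Type*} [Semigroup S] (x : S) (n m : ℕ) (hn : 1 ≤ n) (hm : 1 ≤ m) :
    pw x n * pw x m = pw x (n + m) := by
  induction m with
  | zero => omega
  | succ m ih =>
    rcases Nat.eq_or_lt_of_le hm with h | h
    · rw [← h]; exact (pw_succ x n hn).symm
    · have hm1 : 1 ≤ m := by omega
      rw [pw_succ x m hm1, ← mul_assoc, ih hm1, ← pw_succ x (n + m) (by omega)]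
      ring_nf

lemma pw_stable {S : Type*} [Semigroup S] (x : S) (n : ℕ) (hn : 1 ≤ n)
    (hid : ∀ x : S, pw x n = pw x (n + 1)) (k : ℕ) :
    pw x (n + k) = pw x n := by
  induction k with
  | zero => rfl
  | succ k ih =>
    rw [show n + (k + 1) = (n + k) + 1 by ring, pw_succ x (n + k) (by omega), ih,
      ← pw_succ x n hn, ← hid x]

/-- In an inverse semigroup satisfying xⁿ = xⁿ⁺¹ (n ≥ 1), the element
a ⊕ b := (a * b⁻¹)ⁿ * a satisfies a ⊕ b ≤ a in the natural partial order. -/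
theorem stmt_5 {S : Type*} [Semigroup S] (inv : S → S)
    (h1 : ∀ x, x * inv x * x = x)
    (h2 : ∀ x, inv x * x * inv x = inv x)
    (huniq : ∀ x y, x * y * x = x → y * x * y = y → y = inv x)
    (n : ℕ) (hn : 1 ≤ n) (hid : ∀ x : S, pw x n = pw x (n + 1))
    (a b : S) :
    ∃ e, e * e = e ∧ pw (a * inv b) n * a = e * a := by
  refine ⟨pw (a * inv b) n, ?_, rfl⟩
  rw [pw_add _ n n hn hn, show n + n = n + n from rfl, pw_stable _ n hn hid n]
end

section
/- Let S be an inverse semigroup satisfying xⁿ = xⁿ⁺¹ for some n ≥ 1. Then for all a, b, c ∈ S, if c ≤ a and c ≤ b in the natural partial order, then c ≤ (a·b⁻¹)ⁿ·a. Hence (a·b⁻¹)ⁿ·a is the infimum of {a, b} with respect to the natural partial order. -/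
section helpers

variable {S : Type*} [Semigroup S]

lemma pw_succ' (x : S) : ∀ k, 1 ≤ k → pw x (k + 1) = pw x k * x
  | 0, h => by omega
  | k + 1, _ => rfl

lemma inv_invol' (inv : S → S)
    (h1 : ∀ x, x * inv x * x = x) (h2 : ∀ x, inv x * x * inv x = inv x)
    (huniq : ∀ x y, x * y * x = x → y * x * y = y → y = inv x)
    (x : S) : inv (inv x) = x := (huniq (inv x) x (h2 x) (h1 x)).symm

lemma idem_inv' (inv : S → S)
    (huniq : ∀ x y, x * y * x = x → y * x * y = y → y = inv x)
    {e : S} (he : e * e = e) : inv e = e :=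
  (huniq e e (by rw [he, he]) (by rw [he, he])).symm

lemma mul_inv_idem' (inv : S → S) (h1 : ∀ x, x * inv x * x = x)
    (x : S) : (x * inv x) * (x * inv x) = x * inv x := by
  calc (x * inv x) * (x * inv x) = (x * inv x * x) * inv x := by simp only [mul_assoc]
    _ = x * inv x := by rw [h1]

lemma inv_mul_idem' (inv : S → S) (h2 : ∀ x, inv x * x * inv x = inv x)
    (x : S) : (inv x * x) * (inv x * x) = inv x * x := by
  calc (inv x * x) * (inv x * x) = (inv x * x * inv x) * x := by simp only [mul_assoc]
    _ = inv x * x := by rw [h2]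

lemma idem_mul_idem' (inv : S → S)
    (h1 : ∀ x, x * inv x * x = x) (h2 : ∀ x, inv x * x * inv x = inv x)
    (huniq : ∀ x y, x * y * x = x → y * x * y = y → y = inv x)
    {e f : S} (he : e * e = e) (hf : f * f = f) :
    (e * f) * (e * f) = e * f := by
  have hz1 := h1 (e * f)
  have hz2 := h2 (e * f)
  set z := inv (e * f) with hzdef
  have hz2t : ∀ w, z * (e * (f * (z * w))) = z * w := fun w => by
    have := congrArg (· * w) hz2
    simpa [mul_assoc] using this
  have hg_idem : (f * z * e) * (f * z * e) = f * z * e := by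
    have : f * (z * (e * (f * (z * e)))) = f * (z * e) := by rw [hz2t]
    simpa [mul_assoc] using this
  have hft : ∀ w, f * (f * w) = f * w := fun w => by
    have := congrArg (· * w) hf; simpa [mul_assoc] using this
  have het : ∀ w, e * (e * w) = e * w := fun w => by
    have := congrArg (· * w) he; simpa [mul_assoc] using this
  have g_inv1 : (e * f) * (f * z * e) * (e * f) = e * f := by
    calc (e * f) * (f * z * e) * (e * f)
        = e * (f * (f * (z * (e * (e * f))))) := by simp only [mul_assoc]
      _ = e * (f * (z * (e * f))) := by rw [hft, het]
      _ = e * f := by simpa [mul_assoc] using hz1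
  have g_inv2 : (f * z * e) * (e * f) * (f * z * e) = f * z * e := by
    calc (f * z * e) * (e * f) * (f * z * e)
        = f * (z * (e * (e * (f * (f * (z * e)))))) := by simp only [mul_assoc]
      _ = f * (z * (e * (f * (z * e)))) := by rw [het, hft]
      _ = f * (z * e) := by rw [hz2t]
      _ = f * z * e := by rw [mul_assoc]
  have hzg : f * z * e = z := huniq (e * f) (f * z * e) g_inv1 g_inv2
  have z_idem : z * z = z := by rw [hzg] at hg_idem; exact hg_idem
  have hefz : e * f = z := by
    have h3 : inv z = z := idem_inv' inv huniq z_idem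
    have h4 : inv (inv (e * f)) = e * f := inv_invol' inv h1 h2 huniq (e * f)
    rw [← h4]; exact h3
  rw [hefz]; exact z_idem

lemma idem_comm' (inv : S → S)
    (h1 : ∀ x, x * inv x * x = x) (h2 : ∀ x, inv x * x * inv x = inv x)
    (huniq : ∀ x y, x * y * x = x → y * x * y = y → y = inv x)
    {e f : S} (he : e * e = e) (hf : f * f = f) : e * f = f * e := by
  have hef : (e * f) * (e * f) = e * f := idem_mul_idem' inv h1 h2 huniq he hf
  have hfe : (f * e) * (f * e) = f * e := idem_mul_idem' inv h1 h2 huniq hf he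
  have hft : ∀ w, f * (f * w) = f * w := fun w => by
    have := congrArg (· * w) hf; simpa [mul_assoc] using this
  have het : ∀ w, e * (e * w) = e * w := fun w => by
    have := congrArg (· * w) he; simpa [mul_assoc] using this
  have P : (e * f) * (f * e) * (e * f) = e * f := by
    calc (e * f) * (f * e) * (e * f) = e * (f * (f * (e * (e * f)))) := by
          simp only [mul_assoc]
      _ = e * (f * (e * f)) := by rw [hft, het]
      _ = (e * f) * (e * f) := by rw [mul_assoc]
      _ = e * f := hef
  have Q : (f * e) * (e * f) * (f * e) = f * e := by
    calc (f * e) * (e * f) * (f * e) = f * (e * (e * (f * (f * e)))) := by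
          simp only [mul_assoc]
      _ = f * (e * (f * e)) := by rw [het, hft]
      _ = (f * e) * (f * e) := by rw [mul_assoc]
      _ = f * e := hfe
  have h5 := huniq (e * f) (f * e) P Q
  rw [h5, idem_inv' inv huniq hef]

lemma sinv_mul' (inv : S → S)
    (h1 : ∀ x, x * inv x * x = x) (h2 : ∀ x, inv x * x * inv x = inv x)
    (huniq : ∀ x y, x * y * x = x → y * x * y = y → y = inv x)
    (x y : S) : inv (x * y) = inv y * inv x := by
  have c : (y * inv y) * (inv x * x) = (inv x * x) * (y * inv y) :=
    idem_comm' inv h1 h2 huniq (mul_inv_idem' inv h1 y) (inv_mul_idem' inv h2 x)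
  have P : (x * y) * (inv y * inv x) * (x * y) = x * y := by
    calc (x * y) * (inv y * inv x) * (x * y)
        = x * ((y * inv y) * (inv x * x)) * y := by simp only [mul_assoc]
      _ = x * ((inv x * x) * (y * inv y)) * y := by rw [c]
      _ = (x * inv x * x) * (y * inv y * y) := by simp only [mul_assoc]
      _ = x * y := by rw [h1, h1]
  have Q : (inv y * inv x) * (x * y) * (inv y * inv x) = inv y * inv x := by
    calc (inv y * inv x) * (x * y) * (inv y * inv x)
        = inv y * ((inv x * x) * (y * inv y)) * inv x := by simp only [mul_assoc]
      _ = inv y * ((y * inv y) * (inv x * x)) * inv x := by rw [← c]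
      _ = (inv y * y * inv y) * (inv x * x * inv x) := by simp only [mul_assoc]
      _ = inv y * inv x := by rw [h2, h2]
  exact (huniq (x * y) (inv y * inv x) P Q).symm

lemma pw_stab' (n : ℕ) (hn : 1 ≤ n) (hid : ∀ x : S, pw x n = pw x (n + 1))
    (x : S) : ∀ k, pw x (n + k) = pw x n
  | 0 => rfl
  | k + 1 => by
    rw [show n + (k + 1) = (n + k) + 1 from rfl, pw_succ' x (n + k) (by omega),
      pw_stab' n hn hid x k, ← pw_succ' x n hn]
    exact (hid x).symm

lemma pw_mul' (n : ℕ) (hn : 1 ≤ n) (x : S) :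
    ∀ k, 1 ≤ k → pw x n * pw x k = pw x (n + k)
  | 0, h => by omega
  | 1, _ => (pw_succ' x n hn).symm
  | k + 2, _ => by
    rw [pw_succ' x (k + 1) (by omega), ← mul_assoc,
      pw_mul' n hn x (k + 1) (by omega), ← pw_succ' x (n + (k + 1)) (by omega)]
    rfl

lemma pw_idem' (n : ℕ) (hn : 1 ≤ n) (hid : ∀ x : S, pw x n = pw x (n + 1))
    (x : S) : pw x n * pw x n = pw x n := by
  rw [pw_mul' n hn x n hn, pw_stab' n hn hid x n]

lemma shift' (a b' : S) : ∀ k, 1 ≤ k → a * pw (b' * a) k = pw (a * b') k * a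
  | 0, h => by omega
  | 1, _ => by show a * (b' * a) = (a * b') * a; rw [mul_assoc]
  | k + 2, _ => by
    rw [pw_succ' (b' * a) (k + 1) (by omega), pw_succ' (a * b') (k + 1) (by omega),
      ← mul_assoc, shift' a b' (k + 1) (by omega)]
    simp only [mul_assoc]

lemma babs' (inv : S → S) (h2 : ∀ x, inv x * x * inv x = inv x) (b a : S) :
    ∀ k, 1 ≤ k → (inv b * b) * pw (inv b * a) k = pw (inv b * a) k
  | 0, h => by omega
  | 1, _ => by
    show (inv b * b) * (inv b * a) = inv b * a
    calc (inv b * b) * (inv b * a) = (inv b * b * inv b) * a := by simp only [mul_assoc]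
      _ = inv b * a := by rw [h2]
  | k + 2, _ => by
    rw [pw_succ' (inv b * a) (k + 1) (by omega), ← mul_assoc,
      babs' inv h2 b a (k + 1) (by omega)]

end helpers

/-- In an inverse semigroup satisfying xⁿ = xⁿ⁺¹ (n ≥ 1): if c ≤ a and c ≤ b
then c ≤ (a * b⁻¹)ⁿ * a; hence (a * b⁻¹)ⁿ * a is the infimum of {a, b}
with respect to the natural partial order. -/
theorem stmt_7 {S : Type*} [Semigroup S] (inv : S → S)
    (h1 : ∀ x, x * inv x * x = x)
    (h2 : ∀ x, inv x * x * inv x = inv x)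
    (huniq : ∀ x y, x * y * x = x → y * x * y = y → y = inv x)
    (n : ℕ) (hn : 1 ≤ n) (hid : ∀ x : S, pw x n = pw x (n + 1))
    (a b : S) :
    (∃ e, e * e = e ∧ pw (a * inv b) n * a = e * a) ∧
    (∃ e, e * e = e ∧ pw (a * inv b) n * a = e * b) ∧
    (∀ c : S, (∃ e, e * e = e ∧ c = e * a) → (∃ e, e * e = e ∧ c = e * b) →
      ∃ e, e * e = e ∧ c = e * (pw (a * inv b) n * a)) := by
  have he : pw (a * inv b) n * pw (a * inv b) n = pw (a * inv b) n :=
    pw_idem' n hn hid (a * inv b)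
  have ht : pw (inv b * a) n * pw (inv b * a) n = pw (inv b * a) n :=
    pw_idem' n hn hid (inv b * a)
  refine ⟨⟨pw (a * inv b) n, he, rfl⟩, ⟨pw (a * inv b) n, he, ?_⟩, ?_⟩
  · -- pw u n * a = pw u n * b
    have hb : (inv b * b) * (inv b * b) = inv b * b := inv_mul_idem' inv h2 b
    have ct : pw (inv b * a) n * (inv b * b) = (inv b * b) * pw (inv b * a) n :=
      idem_comm' inv h1 h2 huniq ht hb
    calc pw (a * inv b) n * a = a * pw (inv b * a) n := (shift' a (inv b) n hn).symm
      _ = a * (pw (inv b * a) n * (inv b * b)) := by rw [ct, babs' inv h2 b a n hn]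
      _ = ((a * pw (inv b * a) n) * inv b) * b := by simp only [mul_assoc]
      _ = ((pw (a * inv b) n * a) * inv b) * b := by rw [shift' a (inv b) n hn]
      _ = pw (a * inv b) (n + 1) * b := by
          have hstep : (pw (a * inv b) n * a) * inv b = pw (a * inv b) (n + 1) := by
            rw [mul_assoc, ← pw_succ' (a * inv b) n hn]
          rw [hstep]
      _ = pw (a * inv b) n * b := by
          rw [show pw (a * inv b) (n + 1) = pw (a * inv b) n from
            pw_stab' n hn hid (a * inv b) 1]
  · rintro c ⟨e1, he1, hc1⟩ ⟨e2, he2, hc2⟩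
    have restrict : ∀ (e' x : S), e' * e' = e' → c = e' * x → c = (c * inv c) * x := by
      intro e' x he' hc
      have hia : inv c = inv x * e' := by
        rw [hc, sinv_mul' inv h1 h2 huniq, idem_inv' inv huniq he']
      have cm : (x * inv x) * e' = e' * (x * inv x) :=
        idem_comm' inv h1 h2 huniq (mul_inv_idem' inv h1 x) he'
      have : (c * inv c) * x = c := by
        calc (c * inv c) * x = e' * ((x * inv x) * e') * x := by
              rw [hia, hc]; simp only [mul_assoc]
          _ = e' * (e' * (x * inv x)) * x := by rw [cm]
          _ = (e' * e') * ((x * inv x) * x) := by simp only [mul_assoc]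
          _ = e' * x := by rw [he', h1]
          _ = c := hc.symm
      exact this.symm
    have hfi : (c * inv c) * (c * inv c) = c * inv c := mul_inv_idem' inv h1 c
    set f := c * inv c with hfdef
    have ha' : c = f * a := restrict e1 a he1 hc1
    have hb' : c = f * b := restrict e2 b he2 hc2
    have hj : (b * inv b) * (b * inv b) = b * inv b := mul_inv_idem' inv h1 b
    have cfj : f * (b * inv b) = (b * inv b) * f := idem_comm' inv h1 h2 huniq hfi hj
    have step1 : f * (a * inv b) = f * (b * inv b) := by
      calc f * (a * inv b) = (f * a) * inv b := (mul_assoc _ _ _).symm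
        _ = c * inv b := by rw [← ha']
        _ = (f * b) * inv b := by rw [hb']
        _ = f * (b * inv b) := mul_assoc _ _ _
    have hfu : ∀ k, 1 ≤ k → f * pw (a * inv b) k = f * (b * inv b) := by
      intro k hk
      induction k with
      | zero => omega
      | succ m ih =>
        rcases Nat.eq_or_lt_of_le hk with h | h
        · rw [show m + 1 = 1 by omega]; exact step1
        · have hm : 1 ≤ m := by omega
          calc f * pw (a * inv b) (m + 1)
              = (f * pw (a * inv b) m) * (a * inv b) := by
                rw [pw_succ' (a * inv b) m hm, ← mul_assoc]
            _ = (f * (b * inv b)) * (a * inv b) := by rw [ih hm]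
            _ = ((b * inv b) * f) * (a * inv b) := by rw [cfj]
            _ = (b * inv b) * (f * (a * inv b)) := mul_assoc _ _ _
            _ = (b * inv b) * (f * (b * inv b)) := by rw [step1]
            _ = (b * inv b) * ((b * inv b) * f) := by rw [cfj]
            _ = ((b * inv b) * (b * inv b)) * f := (mul_assoc _ _ _).symm
            _ = (b * inv b) * f := by rw [hj]
            _ = f * (b * inv b) := cfj.symm
    refine ⟨f, hfi, ?_⟩
    have final : f * (pw (a * inv b) n * a) = c := by
      calc f * (pw (a * inv b) n * a)
          = (f * pw (a * inv b) n) * a := (mul_assoc _ _ _).symm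
        _ = (f * (b * inv b)) * a := by rw [hfu n hn]
        _ = ((b * inv b) * f) * a := by rw [cfj]
        _ = (b * inv b) * (f * a) := mul_assoc _ _ _
        _ = (b * inv b) * (f * b) := by rw [← ha', hb']
        _ = ((b * inv b) * f) * b := (mul_assoc _ _ _).symm
        _ = (f * (b * inv b)) * b := by rw [← cfj]
        _ = f * ((b * inv b) * b) := mul_assoc _ _ _
        _ = f * b := by rw [mul_assoc, ← mul_assoc, h1]
        _ = c := hb'.symm
    exact final.symm
end

section
/- Let S be an inverse semigroup satisfying xⁿ = xⁿ⁺¹ for some n ≥ 1. Then (S, ⊕, ·) with a ⊕ b := (a·b⁻¹)ⁿ·a is an additively idempotent semiring: (S,⊕) is a semilattice, (S,·) is a semigroup, and · distributes over ⊕ on both sides. -/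
set_option linter.unusedSectionVars false
set_option linter.unreachableTactic false
set_option linter.unusedTactic false

namespace Stmt11

/-- The natural partial order on an inverse semigroup. -/
def below {S : Type*} [Mul S] (x y : S) : Prop := ∃ e, e * e = e ∧ x = e * y

section
variable {S : Type*} [Semigroup S]

theorem pw_one (x : S) : pw x 1 = x := rfl

theorem pw_succ (x : S) (k : ℕ) (hk : 1 ≤ k) : pw x (k + 1) = pw x k * x := by
  obtain ⟨m, rfl⟩ : ∃ m, k = m + 1 := ⟨k - 1, by omega⟩
  rfl

theorem mul_pw (x : S) (k : ℕ) (hk : 1 ≤ k) : x * pw x k = pw x (k + 1) := by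
  induction k with
  | zero => omega
  | succ m ih =>
    rcases Nat.eq_or_lt_of_le hk with h | h
    · simp only [← h]; rfl
    · have hm : 1 ≤ m := by omega
      rw [pw_succ x (m + 1) (by omega)]
      conv_lhs => rw [pw_succ x m hm]
      rw [← mul_assoc, ih hm]

theorem pw_add (x : S) (j k : ℕ) (hj : 1 ≤ j) (hk : 1 ≤ k) :
    pw x j * pw x k = pw x (j + k) := by
  induction k with
  | zero => omega
  | succ m ih =>
    rcases Nat.eq_or_lt_of_le hk with h | h
    · rw [← h, pw_one, ← pw_succ x j hj]
    · have hm : 1 ≤ m := by omega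
      rw [pw_succ x m hm, ← mul_assoc, ih hm, ← pw_succ x (j + m) (by omega)]
      try (congr 1 <;> omega)

theorem pw_of_idem (e : S) (he : e * e = e) (k : ℕ) (hk : 1 ≤ k) : pw e k = e := by
  induction k with
  | zero => omega
  | succ m ih =>
    rcases Nat.eq_or_lt_of_le hk with h | h
    · rw [← h]; rfl
    · have hm : 1 ≤ m := by omega
      rw [pw_succ e m hm, ih hm, he]

variable (n : ℕ) (hn : 1 ≤ n) (hid : ∀ x : S, pw x n = pw x (n + 1))
include hn hid

theorem pw_stable (x : S) (k : ℕ) (hk : n ≤ k) : pw x k = pw x n := by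
  induction k with
  | zero => omega
  | succ m ih =>
    rcases Nat.eq_or_lt_of_le hk with h | h
    · rw [← h]
    · have hm : n ≤ m := by omega
      rw [pw_succ x m (by omega), ih hm, ← pw_succ x n hn, ← hid]

theorem pw_n_idem (x : S) : pw x n * pw x n = pw x n := by
  rw [pw_add x n n hn hn, pw_stable n hn hid x (n + n) (by omega)]

theorem pw_n_mul_base (x : S) : pw x n * x = pw x n := by
  rw [← pw_succ x n hn, ← hid]

end

section
variable {S : Type*} [Semigroup S] (inv : S → S)
  (h1 : ∀ x, x * inv x * x = x)
  (h2 : ∀ x, inv x * x * inv x = inv x)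
  (huniq : ∀ x y, x * y * x = x → y * x * y = y → y = inv x)
include h1 h2 huniq

theorem inv_inv (x : S) : inv (inv x) = x :=
  (huniq (inv x) x (h2 x) (h1 x)).symm

theorem inv_idem (e : S) (he : e * e = e) : inv e = e :=
  (huniq e e (by rw [he, he]) (by rw [he, he])).symm

theorem idem_mul (e f : S) (he : e * e = e) (hf : f * f = f) :
    (e * f) * (e * f) = e * f := by
  set g := inv (e * f) with hg
  have h2' : g * (e * f) * g = g := h2 (e * f)
  have key1 : f * g * e = g := by
    apply huniq
    · have : e * f * (f * g * e) * (e * f) = e * f * g * (e * f) := by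
        simp only [mul_assoc]
        rw [← mul_assoc f f, hf, ← mul_assoc e e, he]
        try simp only [mul_assoc]
      rw [this]
      simpa only [mul_assoc] using h1 (e * f)
    · have : f * g * e * (e * f) * (f * g * e) = f * (g * (e * f) * g) * e := by
        simp only [mul_assoc]
        rw [← mul_assoc e e, he, ← mul_assoc f f, hf]
        try simp only [mul_assoc]
      rw [this, h2']
  have gidem : g * g = g := by
    calc g * g = f * g * e * (f * g * e) := by rw [key1]
      _ = f * (g * (e * f) * g) * e := by simp only [mul_assoc]
      _ = f * g * e := by rw [h2']; try simp only [mul_assoc]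
      _ = g := key1
  have h3 : e * f = inv g := huniq g (e * f) h2' (h1 (e * f))
  rw [inv_idem inv h1 h2 huniq g gidem] at h3
  rw [h3, gidem]

theorem idem_comm (e f : S) (he : e * e = e) (hf : f * f = f) :
    e * f = f * e := by
  have hef := idem_mul inv h1 h2 huniq e f he hf
  have hfe := idem_mul inv h1 h2 huniq f e hf he
  have h3 : f * e = inv (e * f) := by
    apply huniq
    · calc e * f * (f * e) * (e * f) = e * (f * f) * ((e * e) * f) := by
            simp only [mul_assoc]
        _ = (e * f) * (e * f) := by rw [hf, he]; try simp only [mul_assoc]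
        _ = e * f := hef
    · calc f * e * (e * f) * (f * e) = f * (e * e) * ((f * f) * e) := by
            simp only [mul_assoc]
        _ = (f * e) * (f * e) := by rw [he, hf]; try simp only [mul_assoc]
        _ = f * e := hfe
  rw [h3, inv_idem inv h1 h2 huniq (e * f) hef]

theorem mul_inv_idem (x : S) : (x * inv x) * (x * inv x) = x * inv x := by
  calc (x * inv x) * (x * inv x) = x * (inv x * x * inv x) := by
        simp only [mul_assoc]
    _ = x * inv x := by rw [h2]

theorem inv_mul_idem (x : S) : (inv x * x) * (inv x * x) = inv x * x := by
  calc (inv x * x) * (inv x * x) = (inv x * x * inv x) * x := by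
        simp only [mul_assoc]
    _ = inv x * x := by rw [h2]

theorem inv_mul (x y : S) : inv (x * y) = inv y * inv x := by
  symm; apply huniq
  · calc x * y * (inv y * inv x) * (x * y)
        = x * ((y * inv y) * (inv x * x)) * y := by simp only [mul_assoc]
      _ = x * ((inv x * x) * (y * inv y)) * y := by
          rw [idem_comm inv h1 h2 huniq _ _ (mul_inv_idem inv h1 h2 huniq y)
            (inv_mul_idem inv h1 h2 huniq x)]
      _ = (x * inv x * x) * (y * inv y * y) := by simp only [mul_assoc]
      _ = x * y := by rw [h1, h1]
  · calc inv y * inv x * (x * y) * (inv y * inv x)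
        = inv y * ((inv x * x) * (y * inv y)) * inv x := by simp only [mul_assoc]
      _ = inv y * ((y * inv y) * (inv x * x)) * inv x := by
          rw [idem_comm inv h1 h2 huniq _ _ (inv_mul_idem inv h1 h2 huniq x)
            (mul_inv_idem inv h1 h2 huniq y)]
      _ = (inv y * y * inv y) * (inv x * x * inv x) := by simp only [mul_assoc]
      _ = inv y * inv x := by rw [h2, h2]

theorem inv_pw (x : S) (k : ℕ) (hk : 1 ≤ k) : inv (pw x k) = pw (inv x) k := by
  induction k with
  | zero => omega
  | succ m ih =>
    rcases Nat.eq_or_lt_of_le hk with h | h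
    · rw [← h]; rfl
    · have hm : 1 ≤ m := by omega
      rw [pw_succ x m hm, inv_mul inv h1 h2 huniq, ih hm, mul_pw (inv x) m hm]

theorem mul_inv_mul (a : S) : a * (inv a * a) = a := by
  rw [← mul_assoc, h1]

/-! ### order lemmas -/

theorem below_trans {x y z : S} (hxy : below x y) (hyz : below y z) :
    below x z := by
  obtain ⟨e, he, hx⟩ := hxy
  obtain ⟨f, hf, hy⟩ := hyz
  exact ⟨e * f, idem_mul inv h1 h2 huniq e f he hf, by rw [hx, hy, ← mul_assoc]⟩

theorem below_antisymm {x y : S} (hxy : below x y) (hyx : below y x) :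
    x = y := by
  obtain ⟨e, he, hx⟩ := hxy
  obtain ⟨f, hf, hy⟩ := hyx
  have hfy : f * y = y := by
    conv_lhs => rw [hy]
    rw [← mul_assoc, hf, ← hy]
  have hy2 : y = (e * f) * y := by
    calc y = f * x := hy
      _ = f * (e * y) := by rw [← hx]
      _ = (f * e) * y := (mul_assoc _ _ _).symm
      _ = (e * f) * y := by rw [idem_comm inv h1 h2 huniq f e hf he]
  calc x = e * y := hx
    _ = e * (f * y) := by rw [hfy]
    _ = (e * f) * y := (mul_assoc _ _ _).symm
    _ = y := hy2.symm

theorem below_eq {x y : S} (hxy : below x y) : x = (x * inv x) * y := by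
  obtain ⟨e, he, hx⟩ := hxy
  have hie : inv e = e := inv_idem inv h1 h2 huniq e he
  have hxi : inv x = inv y * e := by
    rw [hx, inv_mul inv h1 h2 huniq, hie]
  have h4 : x * inv x = e * (y * inv y) * e := by
    rw [hxi]
    conv_lhs => rw [hx]
    simp only [mul_assoc]
  have : (x * inv x) * y = x := by
    calc (x * inv x) * y
        = (e * ((y * inv y) * e)) * y := by rw [h4, mul_assoc e (y * inv y) e]
      _ = (e * (e * (y * inv y))) * y := by
          rw [idem_comm inv h1 h2 huniq (y * inv y) e
            (mul_inv_idem inv h1 h2 huniq y) he]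
      _ = ((e * e) * (y * inv y)) * y := by simp only [mul_assoc]
      _ = (e * (y * inv y)) * y := by rw [he]
      _ = e * (y * inv y * y) := by simp only [mul_assoc]
      _ = e * y := by rw [h1]
      _ = x := hx.symm
  exact this.symm


theorem mul_below_left {x y : S} (c : S) (hxy : below x y) :
    below (c * x) (c * y) := by
  obtain ⟨e, he, hx⟩ := hxy
  have hc : c * (inv c * c) = c := mul_inv_mul inv h1 h2 huniq c
  have hcomm : (inv c * c) * e = e * (inv c * c) :=
    idem_comm inv h1 h2 huniq (inv c * c) e (inv_mul_idem inv h1 h2 huniq c) he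
  refine ⟨c * e * inv c, ?_, ?_⟩
  · calc (c * e * inv c) * (c * e * inv c)
        = c * ((e * (inv c * c)) * (e * inv c)) := by simp only [mul_assoc]
      _ = c * (((inv c * c) * e) * (e * inv c)) := by rw [hcomm]
      _ = (c * (inv c * c)) * ((e * e) * inv c) := by simp only [mul_assoc]
      _ = (c * (inv c * c)) * (e * inv c) := by rw [he]
      _ = c * e * inv c := by rw [hc]; simp only [mul_assoc]
  · calc c * x = c * (e * y) := by rw [hx]
      _ = (c * (inv c * c)) * (e * y) := by conv_lhs => rw [← hc]
      _ = c * (((inv c * c) * e) * y) := by simp only [mul_assoc]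
      _ = c * ((e * (inv c * c)) * y) := by rw [hcomm]
      _ = (c * e * inv c) * (c * y) := by simp only [mul_assoc]

theorem mul_below_right {x y : S} (c : S) (hxy : below x y) :
    below (x * c) (y * c) := by
  obtain ⟨e, he, hx⟩ := hxy
  exact ⟨e, he, by rw [hx, mul_assoc]⟩

theorem below_inv_mul_left (c y : S) : below ((inv c * c) * y) y :=
  ⟨inv c * c, inv_mul_idem inv h1 h2 huniq c, rfl⟩

theorem below_mul_mul_inv (a c : S) : below (a * (c * inv c)) a := by
  have haa : a * (inv a * a) = a := mul_inv_mul inv h1 h2 huniq a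
  have hcomm : (c * inv c) * (inv a * a) = (inv a * a) * (c * inv c) :=
    idem_comm inv h1 h2 huniq (c * inv c) (inv a * a)
      (mul_inv_idem inv h1 h2 huniq c) (inv_mul_idem inv h1 h2 huniq a)
  refine ⟨a * (c * inv c) * inv a, ?_, ?_⟩
  · calc (a * (c * inv c) * inv a) * (a * (c * inv c) * inv a)
        = a * (((c * inv c) * (inv a * a)) * ((c * inv c) * inv a)) := by
          simp only [mul_assoc]
      _ = a * (((inv a * a) * (c * inv c)) * ((c * inv c) * inv a)) := by
          rw [hcomm]
      _ = (a * (inv a * a)) * (((c * inv c) * (c * inv c)) * inv a) := by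
          simp only [mul_assoc]
      _ = (a * (inv a * a)) * ((c * inv c) * inv a) := by
          rw [mul_inv_idem inv h1 h2 huniq c]
      _ = a * (c * inv c) * inv a := by rw [haa]; simp only [mul_assoc]
  · calc a * (c * inv c)
        = (a * (inv a * a)) * (c * inv c) := by conv_lhs => rw [← haa]
      _ = a * ((inv a * a) * (c * inv c)) := by simp only [mul_assoc]
      _ = a * ((c * inv c) * (inv a * a)) := by rw [hcomm]
      _ = (a * (c * inv c) * inv a) * a := by simp only [mul_assoc]

end

section
variable {S : Type*} [Semigroup S] (inv : S → S)
  (h1 : ∀ x, x * inv x * x = x)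
  (h2 : ∀ x, inv x * x * inv x = inv x)
  (huniq : ∀ x y, x * y * x = x → y * x * y = y → y = inv x)
  (n : ℕ) (hn : 1 ≤ n) (hid : ∀ x : S, pw x n = pw x (n + 1))
include h1 h2 huniq hn hid

theorem E_symm (a b : S) : pw (a * inv b) n = pw (b * inv a) n := by
  have hE := pw_n_idem n hn hid (a * inv b)
  calc pw (a * inv b) n = inv (pw (a * inv b) n) :=
        (inv_idem inv h1 h2 huniq _ hE).symm
    _ = pw (inv (a * inv b)) n := inv_pw inv h1 h2 huniq _ n hn
    _ = pw (b * inv a) n := by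
        rw [inv_mul inv h1 h2 huniq, inv_inv inv h1 h2 huniq]

theorem keyEq (a b : S) : pw (a * inv b) n * a = pw (a * inv b) n * b := by
  have s1 : pw (a * inv b) n * a * (inv b * b) = pw (a * inv b) n * b := by
    calc pw (a * inv b) n * a * (inv b * b)
        = pw (a * inv b) n * (a * inv b) * b := by simp only [mul_assoc]
      _ = pw (a * inv b) n * b := by rw [pw_n_mul_base n hn hid]
  have s2 : pw (b * inv a) n * b * (inv a * a) = pw (b * inv a) n * a := by
    calc pw (b * inv a) n * b * (inv a * a)
        = pw (b * inv a) n * (b * inv a) * a := by simp only [mul_assoc]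
      _ = pw (b * inv a) n * a := by rw [pw_n_mul_base n hn hid]
  have s3 : pw (a * inv b) n * a * (inv a * a) = pw (a * inv b) n * a := by
    calc pw (a * inv b) n * a * (inv a * a)
        = pw (a * inv b) n * (a * inv a * a) := by simp only [mul_assoc]
      _ = pw (a * inv b) n * a := by rw [h1]
  have hEs := E_symm inv h1 h2 huniq n hn hid a b
  have e1 : pw (a * inv b) n * b * (inv a * a) = pw (a * inv b) n * a := by
    rw [hEs]; exact s2
  have hcomm : (inv b * b) * (inv a * a) = (inv a * a) * (inv b * b) :=
    idem_comm inv h1 h2 huniq _ _ (inv_mul_idem inv h1 h2 huniq b)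
      (inv_mul_idem inv h1 h2 huniq a)
  calc pw (a * inv b) n * a
      = pw (a * inv b) n * b * (inv a * a) := e1.symm
    _ = (pw (a * inv b) n * a * (inv b * b)) * (inv a * a) := by rw [s1]
    _ = pw (a * inv b) n * a * ((inv b * b) * (inv a * a)) := by
        simp only [mul_assoc]
    _ = pw (a * inv b) n * a * ((inv a * a) * (inv b * b)) := by rw [hcomm]
    _ = (pw (a * inv b) n * a * (inv a * a)) * (inv b * b) := by
        simp only [mul_assoc]
    _ = pw (a * inv b) n * a * (inv b * b) := by rw [s3]
    _ = pw (a * inv b) n * b := s1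

theorem oplus_lb1 (a b : S) : below (pw (a * inv b) n * a) a :=
  ⟨pw (a * inv b) n, pw_n_idem n hn hid _, rfl⟩

theorem oplus_lb2 (a b : S) : below (pw (a * inv b) n * a) b := by
  rw [keyEq inv h1 h2 huniq n hn hid a b]
  exact ⟨pw (a * inv b) n, pw_n_idem n hn hid _, rfl⟩

theorem oplus_greatest {x a b : S} (hxa : below x a) (hxb : below x b) :
    below x (pw (a * inv b) n * a) := by
  set h := x * inv x with hh_def
  have hh : h * h = h := mul_inv_idem inv h1 h2 huniq x
  have hx_a : x = h * a := below_eq inv h1 h2 huniq hxa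
  have hx_b : x = h * b := below_eq inv h1 h2 huniq hxb
  have hq : (b * inv b) * (b * inv b) = b * inv b := mul_inv_idem inv h1 h2 huniq b
  have hcomm : h * (b * inv b) = (b * inv b) * h :=
    idem_comm inv h1 h2 huniq h (b * inv b) hh hq
  have claim : ∀ k, 1 ≤ k → h * pw (a * inv b) k = h * (b * inv b) := by
    intro k hk
    induction k with
    | zero => omega
    | succ m ih =>
      rcases Nat.eq_or_lt_of_le hk with h' | h'
      · rw [← h']
        calc h * pw (a * inv b) 1 = (h * a) * inv b := by
              rw [pw_one]; simp only [mul_assoc]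
          _ = (h * b) * inv b := by rw [← hx_a, ← hx_b]
          _ = h * (b * inv b) := by simp only [mul_assoc]
      · have hm : 1 ≤ m := by omega
        rw [pw_succ (a * inv b) m hm, ← mul_assoc, ih hm]
        calc (h * (b * inv b)) * (a * inv b)
            = ((b * inv b) * h) * (a * inv b) := by rw [hcomm]
          _ = (b * inv b) * ((h * a) * inv b) := by simp only [mul_assoc]
          _ = (b * inv b) * ((h * b) * inv b) := by rw [← hx_a, ← hx_b]
          _ = ((b * inv b) * h) * (b * inv b) := by simp only [mul_assoc]
          _ = (h * (b * inv b)) * (b * inv b) := by rw [hcomm]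
          _ = h * ((b * inv b) * (b * inv b)) := by simp only [mul_assoc]
          _ = h * (b * inv b) := by rw [hq]
  have key : h * (pw (a * inv b) n * a) = x := by
    calc h * (pw (a * inv b) n * a)
        = (h * pw (a * inv b) n) * a := (mul_assoc _ _ _).symm
      _ = (h * (b * inv b)) * a := by rw [claim n hn]
      _ = ((b * inv b) * h) * a := by rw [hcomm]
      _ = (b * inv b) * (h * b) := by rw [mul_assoc, ← hx_a, ← hx_b, hx_b]
      _ = ((b * inv b) * h) * b := (mul_assoc _ _ _).symm
      _ = (h * (b * inv b)) * b := by rw [hcomm]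
      _ = h * (b * inv b * b) := by simp only [mul_assoc]
      _ = h * b := by rw [h1]
      _ = x := hx_b.symm
  exact ⟨h, hh, key.symm⟩


theorem oplus_comm' (a b : S) : pw (a * inv b) n * a = pw (b * inv a) n * b := by
  rw [keyEq inv h1 h2 huniq n hn hid a b, E_symm inv h1 h2 huniq n hn hid a b]

theorem oplus_idem' (a : S) : pw (a * inv a) n * a = a := by
  rw [pw_of_idem (a * inv a) (mul_inv_idem inv h1 h2 huniq a) n hn]
  exact h1 a

theorem oplus_assoc' (a b c : S) :
    pw ((pw (a * inv b) n * a) * inv c) n * (pw (a * inv b) n * a) =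
      pw (a * inv (pw (b * inv c) n * b)) n * a := by
  have hL_a : below (pw ((pw (a * inv b) n * a) * inv c) n * (pw (a * inv b) n * a)) a :=
    below_trans inv h1 h2 huniq (oplus_lb1 inv h1 h2 huniq n hn hid _ c)
      (oplus_lb1 inv h1 h2 huniq n hn hid a b)
  have hL_b : below (pw ((pw (a * inv b) n * a) * inv c) n * (pw (a * inv b) n * a)) b :=
    below_trans inv h1 h2 huniq (oplus_lb1 inv h1 h2 huniq n hn hid _ c)
      (oplus_lb2 inv h1 h2 huniq n hn hid a b)
  have hL_c : below (pw ((pw (a * inv b) n * a) * inv c) n * (pw (a * inv b) n * a)) c :=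
    oplus_lb2 inv h1 h2 huniq n hn hid _ c
  have hR_a : below (pw (a * inv (pw (b * inv c) n * b)) n * a) a :=
    oplus_lb1 inv h1 h2 huniq n hn hid a _
  have hR_b : below (pw (a * inv (pw (b * inv c) n * b)) n * a) b :=
    below_trans inv h1 h2 huniq (oplus_lb2 inv h1 h2 huniq n hn hid a _)
      (oplus_lb1 inv h1 h2 huniq n hn hid b c)
  have hR_c : below (pw (a * inv (pw (b * inv c) n * b)) n * a) c :=
    below_trans inv h1 h2 huniq (oplus_lb2 inv h1 h2 huniq n hn hid a _)
      (oplus_lb2 inv h1 h2 huniq n hn hid b c)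
  exact below_antisymm inv h1 h2 huniq
    (oplus_greatest inv h1 h2 huniq n hn hid hL_a
      (oplus_greatest inv h1 h2 huniq n hn hid hL_b hL_c))
    (oplus_greatest inv h1 h2 huniq n hn hid
      (oplus_greatest inv h1 h2 huniq n hn hid hR_a hR_b) hR_c)

theorem oplus_distl (a b c : S) :
    c * (pw (a * inv b) n * a) = pw ((c * a) * inv (c * b)) n * (c * a) := by
  have d1 : below (c * (pw (a * inv b) n * a)) (pw ((c * a) * inv (c * b)) n * (c * a)) :=
    oplus_greatest inv h1 h2 huniq n hn hid
      (mul_below_left inv h1 h2 huniq c (oplus_lb1 inv h1 h2 huniq n hn hid a b))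
      (mul_below_left inv h1 h2 huniq c (oplus_lb2 inv h1 h2 huniq n hn hid a b))
  have hX1 : below (pw ((c * a) * inv (c * b)) n * (c * a)) (c * a) :=
    oplus_lb1 inv h1 h2 huniq n hn hid (c * a) (c * b)
  have hX2 : below (pw ((c * a) * inv (c * b)) n * (c * a)) (c * b) :=
    oplus_lb2 inv h1 h2 huniq n hn hid (c * a) (c * b)
  have hc1 : below (inv c * (pw ((c * a) * inv (c * b)) n * (c * a))) a :=
    below_trans inv h1 h2 huniq (mul_below_left inv h1 h2 huniq (inv c) hX1)
      (by rw [← mul_assoc]; exact below_inv_mul_left inv h1 h2 huniq c a)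
  have hc2 : below (inv c * (pw ((c * a) * inv (c * b)) n * (c * a))) b :=
    below_trans inv h1 h2 huniq (mul_below_left inv h1 h2 huniq (inv c) hX2)
      (by rw [← mul_assoc]; exact below_inv_mul_left inv h1 h2 huniq c b)
  have hm : below (inv c * (pw ((c * a) * inv (c * b)) n * (c * a)))
      (pw (a * inv b) n * a) :=
    oplus_greatest inv h1 h2 huniq n hn hid hc1 hc2
  have step := mul_below_left inv h1 h2 huniq c hm
  have hXe : pw ((c * a) * inv (c * b)) n * (c * a) =
      ((pw ((c * a) * inv (c * b)) n * (c * a)) *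
        inv (pw ((c * a) * inv (c * b)) n * (c * a))) * (c * a) :=
    below_eq inv h1 h2 huniq hX1
  have hcomm : (c * inv c) *
        ((pw ((c * a) * inv (c * b)) n * (c * a)) *
          inv (pw ((c * a) * inv (c * b)) n * (c * a))) =
      ((pw ((c * a) * inv (c * b)) n * (c * a)) *
          inv (pw ((c * a) * inv (c * b)) n * (c * a))) * (c * inv c) :=
    idem_comm inv h1 h2 huniq _ _ (mul_inv_idem inv h1 h2 huniq c)
      (mul_inv_idem inv h1 h2 huniq _)
  have eq : c * (inv c * (pw ((c * a) * inv (c * b)) n * (c * a))) =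
      pw ((c * a) * inv (c * b)) n * (c * a) := by
    calc c * (inv c * (pw ((c * a) * inv (c * b)) n * (c * a)))
        = (c * inv c) * (pw ((c * a) * inv (c * b)) n * (c * a)) :=
          (mul_assoc _ _ _).symm
      _ = (c * inv c) * (((pw ((c * a) * inv (c * b)) n * (c * a)) *
            inv (pw ((c * a) * inv (c * b)) n * (c * a))) * (c * a)) := by
          conv_lhs => rw [hXe]
      _ = ((c * inv c) * ((pw ((c * a) * inv (c * b)) n * (c * a)) *
            inv (pw ((c * a) * inv (c * b)) n * (c * a)))) * (c * a) :=
          (mul_assoc _ _ _).symm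
      _ = (((pw ((c * a) * inv (c * b)) n * (c * a)) *
            inv (pw ((c * a) * inv (c * b)) n * (c * a))) * (c * inv c)) * (c * a) := by
          rw [hcomm]
      _ = ((pw ((c * a) * inv (c * b)) n * (c * a)) *
            inv (pw ((c * a) * inv (c * b)) n * (c * a))) * (c * inv c * c * a) := by
          simp only [mul_assoc]
      _ = ((pw ((c * a) * inv (c * b)) n * (c * a)) *
            inv (pw ((c * a) * inv (c * b)) n * (c * a))) * (c * a) := by
          rw [h1]
      _ = pw ((c * a) * inv (c * b)) n * (c * a) := hXe.symm
  rw [eq] at step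
  exact below_antisymm inv h1 h2 huniq d1 step

theorem oplus_distr (a b c : S) :
    (pw (a * inv b) n * a) * c = pw ((a * c) * inv (b * c)) n * (a * c) := by
  have d1 : below ((pw (a * inv b) n * a) * c) (pw ((a * c) * inv (b * c)) n * (a * c)) :=
    oplus_greatest inv h1 h2 huniq n hn hid
      (mul_below_right inv h1 h2 huniq c (oplus_lb1 inv h1 h2 huniq n hn hid a b))
      (mul_below_right inv h1 h2 huniq c (oplus_lb2 inv h1 h2 huniq n hn hid a b))
  have hX1 : below (pw ((a * c) * inv (b * c)) n * (a * c)) (a * c) :=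
    oplus_lb1 inv h1 h2 huniq n hn hid (a * c) (b * c)
  have hX2 : below (pw ((a * c) * inv (b * c)) n * (a * c)) (b * c) :=
    oplus_lb2 inv h1 h2 huniq n hn hid (a * c) (b * c)
  have hc1 : below ((pw ((a * c) * inv (b * c)) n * (a * c)) * inv c) a :=
    below_trans inv h1 h2 huniq (mul_below_right inv h1 h2 huniq (inv c) hX1)
      (by rw [mul_assoc]; exact below_mul_mul_inv inv h1 h2 huniq a c)
  have hc2 : below ((pw ((a * c) * inv (b * c)) n * (a * c)) * inv c) b :=
    below_trans inv h1 h2 huniq (mul_below_right inv h1 h2 huniq (inv c) hX2)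
      (by rw [mul_assoc]; exact below_mul_mul_inv inv h1 h2 huniq b c)
  have hm : below ((pw ((a * c) * inv (b * c)) n * (a * c)) * inv c)
      (pw (a * inv b) n * a) :=
    oplus_greatest inv h1 h2 huniq n hn hid hc1 hc2
  have step := mul_below_right inv h1 h2 huniq c hm
  have hXe : pw ((a * c) * inv (b * c)) n * (a * c) =
      ((pw ((a * c) * inv (b * c)) n * (a * c)) *
        inv (pw ((a * c) * inv (b * c)) n * (a * c))) * (a * c) :=
    below_eq inv h1 h2 huniq hX1
  have eq : ((pw ((a * c) * inv (b * c)) n * (a * c)) * inv c) * c =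
      pw ((a * c) * inv (b * c)) n * (a * c) := by
    calc ((pw ((a * c) * inv (b * c)) n * (a * c)) * inv c) * c
        = (pw ((a * c) * inv (b * c)) n * (a * c)) * (inv c * c) := mul_assoc _ _ _
      _ = (((pw ((a * c) * inv (b * c)) n * (a * c)) *
            inv (pw ((a * c) * inv (b * c)) n * (a * c))) * (a * c)) * (inv c * c) := by
          conv_lhs => rw [hXe]
      _ = ((pw ((a * c) * inv (b * c)) n * (a * c)) *
            inv (pw ((a * c) * inv (b * c)) n * (a * c))) * (a * (c * (inv c * c))) := by
          simp only [mul_assoc]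
      _ = ((pw ((a * c) * inv (b * c)) n * (a * c)) *
            inv (pw ((a * c) * inv (b * c)) n * (a * c))) * (a * c) := by
          rw [mul_inv_mul inv h1 h2 huniq c]
      _ = pw ((a * c) * inv (b * c)) n * (a * c) := hXe.symm
  rw [eq] at step
  exact below_antisymm inv h1 h2 huniq d1 step

end
end Stmt11

/-- In an inverse semigroup satisfying xⁿ = xⁿ⁺¹ (n ≥ 1), with
a ⊕ b := (a * b⁻¹)ⁿ * a, the structure (S, ⊕, *) is an additively
idempotent semiring: ⊕ is commutative, associative and idempotent,
and * distributes over ⊕ on both sides. -/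
theorem stmt_11 {S : Type*} [Semigroup S] (inv : S → S)
    (h1 : ∀ x, x * inv x * x = x)
    (h2 : ∀ x, inv x * x * inv x = inv x)
    (huniq : ∀ x y, x * y * x = x → y * x * y = y → y = inv x)
    (n : ℕ) (hn : 1 ≤ n) (hid : ∀ x : S, pw x n = pw x (n + 1))
    (oplus : S → S → S) (hop : ∀ a b, oplus a b = pw (a * inv b) n * a) :
    (∀ a b : S, oplus a b = oplus b a) ∧
    (∀ a b c : S, oplus (oplus a b) c = oplus a (oplus b c)) ∧
    (∀ a : S, oplus a a = a) ∧
    (∀ a b c : S, c * oplus a b = oplus (c * a) (c * b)) ∧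
    (∀ a b c : S, oplus a b * c = oplus (a * c) (b * c)) := by
  refine ⟨?_, ?_, ?_, ?_, ?_⟩
  · intro a b
    simp only [hop]
    exact Stmt11.oplus_comm' inv h1 h2 huniq n hn hid a b
  · intro a b c
    simp only [hop]
    exact Stmt11.oplus_assoc' inv h1 h2 huniq n hn hid a b c
  · intro a
    simp only [hop]
    exact Stmt11.oplus_idem' inv h1 h2 huniq n hn hid a
  · intro a b c
    simp only [hop]
    exact Stmt11.oplus_distl inv h1 h2 huniq n hn hid a b c
  · intro a b c
    simp only [hop]
    exact Stmt11.oplus_distr inv h1 h2 huniq n hn hid a b c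
end

section
/- The addition a ⊕ b := (a·bᵀ)²·a on the 6-element Brandt monoid B₂¹ makes (B₂¹, ⊕, ·) an additively idempotent semiring, and a ⊕ b is the greatest lower bound of {a, b} with respect to the natural partial order of B₂¹ as an inverse semigroup. -/
/-- The six 2×2 zero-one matrices 0, E (identity), E₁₂, E₂₁, E₁₁, E₂₂. -/
def B21 : Set (Matrix (Fin 2) (Fin 2) ℕ) :=
  {0, 1, Matrix.single 0 1 1, Matrix.single 1 0 1,
   Matrix.single 0 0 1, Matrix.single 1 1 1}

namespace B21

open Matrix

abbrev M := Matrix (Fin 2) (Fin 2) ℕ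

def elems : List M :=
  [0, 1, single 0 1 1, single 1 0 1, single 0 0 1, single 1 1 1]

theorem mem_iff_mem_elems {x : M} : x ∈ B21 ↔ x ∈ elems := by
  simp [B21, elems]

def oplus (a b : M) : M := a * bᵀ * (a * bᵀ) * a

def NatLE (c a : M) : Prop := ∃ e ∈ B21, e * e = e ∧ c = e * a

theorem oplus_mem : ∀ a ∈ B21, ∀ b ∈ B21, oplus a b ∈ B21 := by
  simp only [mem_iff_mem_elems]
  decide

theorem oplus_comm : ∀ a ∈ B21, ∀ b ∈ B21, oplus a b = oplus b a := by
  simp only [mem_iff_mem_elems]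
  decide

theorem oplus_assoc :
    ∀ a ∈ B21, ∀ b ∈ B21, ∀ c ∈ B21, oplus (oplus a b) c = oplus a (oplus b c) := by
  simp only [mem_iff_mem_elems]
  decide

theorem oplus_self : ∀ a ∈ B21, oplus a a = a := by
  simp only [mem_iff_mem_elems]
  decide

theorem mul_oplus : ∀ a ∈ B21, ∀ b ∈ B21, ∀ c ∈ B21, c * oplus a b = oplus (c * a) (c * b) := by
  simp only [mem_iff_mem_elems]
  decide

theorem oplus_mul : ∀ a ∈ B21, ∀ b ∈ B21, ∀ c ∈ B21, oplus a b * c = oplus (a * c) (b * c) := by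
  simp only [mem_iff_mem_elems]
  decide

theorem oplus_natLE_left : ∀ a ∈ B21, ∀ b ∈ B21, NatLE (oplus a b) a := by
  simp only [NatLE, mem_iff_mem_elems]
  decide

theorem oplus_natLE_right : ∀ a ∈ B21, ∀ b ∈ B21, NatLE (oplus a b) b := by
  simp only [NatLE, mem_iff_mem_elems]
  decide

theorem natLE_oplus :
    ∀ a ∈ B21, ∀ b ∈ B21, ∀ c ∈ B21, NatLE c a → NatLE c b → NatLE c (oplus a b) := by
  simp only [NatLE, mem_iff_mem_elems]
  decide

end B21

/-- With a ⊕ b := (a·bᵀ)²·a, (B₂¹, ⊕, ·) is an additively idempotent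
semiring, and a ⊕ b is the greatest lower bound of {a, b} in the natural
partial order of B₂¹ as an inverse semigroup. -/
theorem stmt_17
    (oplus : Matrix (Fin 2) (Fin 2) ℕ → Matrix (Fin 2) (Fin 2) ℕ →
      Matrix (Fin 2) (Fin 2) ℕ)
    (hop : ∀ a b, oplus a b = (a * b.transpose) * (a * b.transpose) * a)
    (le : Matrix (Fin 2) (Fin 2) ℕ → Matrix (Fin 2) (Fin 2) ℕ → Prop)
    (hle : ∀ a b, le a b ↔ ∃ e ∈ B21, e * e = e ∧ a = e * b) :
    -- additively idempotent semiring structure on B₂¹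
    ((∀ a ∈ B21, ∀ b ∈ B21, oplus a b ∈ B21) ∧
     (∀ a ∈ B21, ∀ b ∈ B21, oplus a b = oplus b a) ∧
     (∀ a ∈ B21, ∀ b ∈ B21, ∀ c ∈ B21, oplus (oplus a b) c = oplus a (oplus b c)) ∧
     (∀ a ∈ B21, oplus a a = a) ∧
     (∀ a ∈ B21, ∀ b ∈ B21, ∀ c ∈ B21, c * oplus a b = oplus (c * a) (c * b)) ∧
     (∀ a ∈ B21, ∀ b ∈ B21, ∀ c ∈ B21, oplus a b * c = oplus (a * c) (b * c))) ∧
    -- a ⊕ b is the greatest lower bound of {a, b}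
    (∀ a ∈ B21, ∀ b ∈ B21,
      le (oplus a b) a ∧ le (oplus a b) b ∧
      ∀ c ∈ B21, le c a → le c b → le c (oplus a b)) := by
  obtain rfl : oplus = B21.oplus := funext₂ hop
  obtain rfl : le = B21.NatLE := funext₂ fun a b => propext (hle a b)
  refine ⟨⟨B21.oplus_mem, B21.oplus_comm, B21.oplus_assoc, B21.oplus_self, B21.mul_oplus,
    B21.oplus_mul⟩, fun a ha b hb => ⟨B21.oplus_natLE_left a ha b hb,
    B21.oplus_natLE_right a ha b hb, B21.natLE_oplus a ha b hb⟩⟩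
end
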